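/- Let σ, δ, γ > 0 be real numbers and let m>1, p>1. Define φ(F) = σF - δ - γ F^((p+m-2)/(m-1)) for F ∈ (0,1). If K σ^((p+m-2)/(p-1)) ≤ δ γ^((m-1)/(p-1)), where K = ((m-1)/(p+m-2))^((m-1)/(p-1)) - ((m-1)/(p+m-2))^((p+m-2)/(p-1)), and (m-1)σ ≤ (p+m-2)γ, then φ(F) ≤ 0 for all F ∈ (0,1). -/

import Mathlib

/-!
With `α = (p+m-2)/(m-1)` and its Hölder conjugate `β = (p+m-2)/(p-1)`, a weighted Young
inequality gives `σ F - γ F ^ α ≤ K σ ^ β / γ ^ ((m-1)/(p-1))` for every `F ≥ 0`, the right-hand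
side being the maximum of the left over `F > 0`; the constant is `K = α ^ (-β/α) / β`. The
hypothesis on `K` says exactly that this maximum is at most `δ`.
-/

open Real

namespace Real

theorem young_inequality_of_nonneg_weighted {a b p q ε : ℝ} (ha : 0 ≤ a) (hb : 0 ≤ b)
    (hε : 0 < ε) (hpq : p.HolderConjugate q) :
    a * b ≤ ε * a ^ p / p + b ^ q / (q * ε ^ (q / p)) := by
  have hε' : 0 < ε ^ p⁻¹ := rpow_pos_of_pos hε _
  calc a * b = ε ^ p⁻¹ * a * (b / ε ^ p⁻¹) := by field_simp
    _ ≤ (ε ^ p⁻¹ * a) ^ p / p + (b / ε ^ p⁻¹) ^ q / q :=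
      young_inequality_of_nonneg (by positivity) (by positivity) hpq
    _ = ε * a ^ p / p + b ^ q / (q * ε ^ (q / p)) := by
      rw [mul_rpow hε'.le ha, div_rpow hb hε'.le, ← rpow_mul hε.le, ← rpow_mul hε.le,
        inv_mul_cancel₀ hpq.ne_zero, rpow_one, inv_mul_eq_div, div_div, mul_comm (ε ^ _)]

lemma holderConjugate_add_div {u v : ℝ} (hu : 0 < u) (hv : 0 < v) :
    ((u + v) / u).HolderConjugate ((u + v) / v) := by
  have h := HolderConjugate.inv_inv (a := u / (u + v)) (b := v / (u + v)) (by positivity)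
    (by positivity) (by field_simp)
  rwa [inv_div, inv_div] at h

end Real

lemma rpow_sub_rpow_add_div {u v : ℝ} (hu : 0 < u) (hv : 0 < v) :
    (u / (u + v)) ^ (u / v) - (u / (u + v)) ^ ((u + v) / v) =
      ((u + v) / u) ^ (-(u / v)) / ((u + v) / v) := by
  have ha : 0 < u / (u + v) := by positivity
  rw [show (u + v) / v = u / v + 1 by field_simp, rpow_add ha, rpow_one, rpow_neg (by positivity),
    ← inv_rpow (by positivity), inv_div]
  field_simp
  ring

lemma mul_sub_mul_rpow_le {u v s c x : ℝ} (hu : 0 < u) (hv : 0 < v) (hs : 0 ≤ s) (hc : 0 < c)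
    (hx : 0 ≤ x) :
    s * x - c * x ^ ((u + v) / u) ≤
      ((u + v) / u) ^ (-(u / v)) / ((u + v) / v) * s ^ ((u + v) / v) / c ^ (u / v) := by
  set α := (u + v) / u
  set β := (u + v) / v
  have hα : 0 < α := by positivity
  have hβα : β / α = u / v := by simp only [α, β]; field_simp
  have young := young_inequality_of_nonneg_weighted hx hs (mul_pos hα hc)
    (holderConjugate_add_div hu hv)
  rw [hβα, mul_rpow hα.le hc.le, mul_assoc, mul_div_cancel_left₀ _ hα.ne'] at young
  calc s * x - c * x ^ α ≤ s ^ β / (β * (α ^ (u / v) * c ^ (u / v))) := by linarith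
    _ = _ := by rw [rpow_neg hα.le]; field_simp

theorem stmt1_general (m p σ δ γ : ℝ) (hm : 1 < m) (hp : 1 < p)
    (hσ : 0 < σ) (hγ : 0 < γ)
    (hK : (((m - 1) / (p + m - 2)) ^ ((m - 1) / (p - 1)) -
        ((m - 1) / (p + m - 2)) ^ ((p + m - 2) / (p - 1))) * σ ^ ((p + m - 2) / (p - 1))
        ≤ δ * γ ^ ((m - 1) / (p - 1))) :
    ∀ F ∈ Set.Ioo (0 : ℝ) 1, σ * F - δ - γ * F ^ ((p + m - 2) / (m - 1)) ≤ 0 := by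
  intro F hF
  have hu : 0 < m - 1 := by linarith
  have hv : 0 < p - 1 := by linarith
  rw [show p + m - 2 = (m - 1) + (p - 1) by ring] at hK ⊢
  rw [rpow_sub_rpow_add_div hu hv, ← div_le_iff₀ (by positivity)] at hK
  linarith [mul_sub_mul_rpow_le hu hv hσ.le hγ hF.1.le]

theorem stmt1 (m p σ δ γ : ℝ) (hm : 1 < m) (hp : 1 < p)
    (hσ : 0 < σ) (hδ : 0 < δ) (hγ : 0 < γ)
    (hK : (((m - 1) / (p + m - 2)) ^ ((m - 1) / (p - 1)) -
        ((m - 1) / (p + m - 2)) ^ ((p + m - 2) / (p - 1))) * σ ^ ((p + m - 2) / (p - 1))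
        ≤ δ * γ ^ ((m - 1) / (p - 1)))
    (hσγ : (m - 1) * σ ≤ (p + m - 2) * γ) :
    ∀ F ∈ Set.Ioo (0 : ℝ) 1, σ * F - δ - γ * F ^ ((p + m - 2) / (m - 1)) ≤ 0 :=
  stmt1_general m p σ δ γ hm hp hσ hγ hK
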